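/- For integers x, y and r, i with m ∈ ℕ: a^x u^y ∈ G_m(a^r u^i) if and only if k | m·i and 2^l | m·r, where G_m(g) = { a ∈ G : Π_{j=0}^{m-1} a^(-j) g a^j = 1 }. -/

import Mathlib

namespace ZkDl

def n₁ (l : ℕ) : ℕ := 2 ^ (l - 1) + 1
def n₂ (l : ℕ) : ℕ := 2 ^ (l - 1) - 1

/-- The relations of the presentation
`⟨a, u, v | a^(2^l) = u^k = v^2 = 1, u a u⁻¹ = a^(n₁), v a v = a^(n₂), v u v = u⁻¹⟩`,
with generators `a = 0`, `u = 1`, `v = 2` in `Fin 3`. -/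
def rels (l k : ℕ) : Set (FreeGroup (Fin 3)) :=
  { FreeGroup.of 0 ^ 2 ^ l,
    FreeGroup.of 1 ^ k,
    FreeGroup.of 2 ^ 2,
    FreeGroup.of 1 * FreeGroup.of 0 * (FreeGroup.of 1)⁻¹ * (FreeGroup.of 0 ^ n₁ l)⁻¹,
    FreeGroup.of 2 * FreeGroup.of 0 * FreeGroup.of 2 * (FreeGroup.of 0 ^ n₂ l)⁻¹,
    FreeGroup.of 2 * FreeGroup.of 1 * FreeGroup.of 2 * FreeGroup.of 1 }

/-- The group `Z_{2^l} ⋊ D_k` given by the presentation above. -/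
abbrev G (l k : ℕ) : Type := PresentedGroup (rels l k)

def a (l k : ℕ) : G l k := PresentedGroup.of 0
def u (l k : ℕ) : G l k := PresentedGroup.of 1
def v (l k : ℕ) : G l k := PresentedGroup.of 2

end ZkDl

open ZkDl

/-- The set `G_m(g) = { h ∈ G : ∏_{j=0}^{m-1} h^{-j} g h^j = 1 }`. -/
def Gm (l k : ℕ) (g : G l k) (m : ℕ) : Set (G l k) :=
  {h : G l k | ((List.range m).map (fun j => h ^ (-(j : ℤ)) * g * h ^ (j : ℤ))).prod = 1}

/-!
The product `∏_{j<m} h^{-j} g h^j` telescopes to `(g h⁻¹)^m h^m`, which lies in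
`⟨a⟩⟨u⟩ = {a^S u^T}` because `u` normalises `⟨a⟩`. Such an element is trivial iff `2^l ∣ S` and
`k ∣ T`, and both can be read off its image under the representation
`G → Perm (ZMod 2^l) × D_k` sending `a` to the translation `x ↦ x + 1`, and `u`, `v` to the
multiplications by `n₁`, `n₂` paired with a rotation and a reflection of the `k`-gon.
In `ZMod 2^l` we have `n₁ = 1 + 2f` and `n₂ = -n₁`, where `f = 2^(l-2)` satisfies `4f = 0`.
Hence `n₁^T = 1 + 2Tf` is linear in `T`, and the image of `(g h⁻¹)^m h^m` is explicit: the
rotation by `m i`, together with an affine map that, once `4 ∣ m i`, sends `0` to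
`r m (1 - y f (m - 1))`; the second factor is a unit for `l ≥ 3`.
-/

open Finset

section AffinePerm

variable {R : Type*} [CommRing R]

def affinePerm (b : R) (c : Rˣ) : Equiv.Perm R where
  toFun x := b + c * x
  invFun x := ↑c⁻¹ * (x - b)
  left_inv x := by simp
  right_inv x := by simp

@[simp]
lemma affinePerm_apply (b : R) (c : Rˣ) (x : R) : affinePerm b c x = b + c * x := rfl

@[simp]
lemma affinePerm_zero_one : affinePerm (0 : R) 1 = 1 := by
  ext x; simp

lemma affinePerm_mul (b b' : R) (c c' : Rˣ) :
    affinePerm b c * affinePerm b' c' = affinePerm (b + c * b') (c * c') := by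
  ext x
  simp only [Equiv.Perm.mul_apply, affinePerm_apply, Units.val_mul]
  ring

lemma affinePerm_inv (b : R) (c : Rˣ) :
    (affinePerm b c)⁻¹ = affinePerm (-(↑c⁻¹ * b)) c⁻¹ := by
  rw [inv_eq_iff_mul_eq_one, affinePerm_mul]
  ext x; simp

lemma affinePerm_mul_inv (b b' : R) (c c' : Rˣ) :
    affinePerm b c * (affinePerm b' c')⁻¹ = affinePerm (b - ↑(c * c'⁻¹) * b') (c * c'⁻¹) := by
  rw [affinePerm_inv, affinePerm_mul]
  ext x
  simp only [affinePerm_apply, Units.val_mul]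
  ring

lemma affinePerm_pow (b : R) (c : Rˣ) (m : ℕ) :
    affinePerm b c ^ m = affinePerm (b * ∑ j ∈ range m, (c : R) ^ j) (c ^ m) := by
  induction m with
  | zero => simp
  | succ m ih =>
    rw [pow_succ, ih, affinePerm_mul, sum_range_succ, pow_succ]
    ext x
    simp only [affinePerm_apply, Units.val_pow_eq_pow_val]
    ring

lemma affinePerm_one_zpow (b : R) (n : ℤ) : affinePerm b 1 ^ n = affinePerm (n * b) 1 := by
  induction n using Int.induction_on with
  | zero => simp
  | succ n ih =>
    rw [zpow_add_one, ih, affinePerm_mul]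
    ext x; simp only [affinePerm_apply, Units.val_one]; push_cast; ring
  | pred n ih =>
    rw [zpow_sub_one, ih, affinePerm_inv, affinePerm_mul]
    ext x; simp only [affinePerm_apply, inv_one, Units.val_one]; push_cast; ring

lemma affinePerm_zero_zpow (c : Rˣ) (n : ℤ) : affinePerm 0 c ^ n = affinePerm 0 (c ^ n) := by
  induction n using Int.induction_on with
  | zero => simp
  | succ n ih => rw [zpow_add_one, ih, affinePerm_mul, zpow_add_one]; simp
  | pred n ih => rw [zpow_sub_one, ih, affinePerm_inv, affinePerm_mul, zpow_sub_one]; simp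

lemma Units.val_zpow_eq_one_add_mul {ε : Rˣ} {e : R} (hε : (ε : R) = 1 + e) (he : e * e = 0)
    (n : ℤ) : ((ε ^ n : Rˣ) : R) = 1 + n * e := by
  have hinv : ((ε⁻¹ : Rˣ) : R) = 1 - e :=
    Units.inv_eq_of_mul_eq_one_right (by rw [hε]; linear_combination -he)
  induction n using Int.induction_on with
  | zero => simp
  | succ n ih => rw [zpow_add_one, Units.val_mul, ih, hε]; push_cast; linear_combination n * he
  | pred n ih => rw [zpow_sub_one, Units.val_mul, ih, hinv]; push_cast; linear_combination n * he

lemma sum_range_natCast_mul_two (m : ℕ) : (∑ j ∈ range m, (j : R)) * 2 = m * (m - 1) := by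
  induction m with
  | zero => simp
  | succ m ih => rw [sum_range_succ, add_mul, ih]; push_cast; ring

lemma sum_range_pow_val_zpow {ε : Rˣ} {e : R} (hε : (ε : R) = 1 + e) (he : e * e = 0)
    (z : ℤ) (m : ℕ) :
    ∑ j ∈ range m, ((ε ^ z : Rˣ) : R) ^ j = m + z * (∑ j ∈ range m, (j : R)) * e := by
  simp_rw [← Units.val_pow_eq_pow_val, ← zpow_natCast, ← zpow_mul,
    Units.val_zpow_eq_one_add_mul hε he, sum_add_distrib, mul_sum, sum_mul]
  push_cast
  simp only [sum_const, card_range, nsmul_eq_mul, mul_one]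

theorem affinePerm_mul_inv_pow_mul_pow_apply_zero {ε : Rˣ} {f : R}
    (hε : (ε : R) = 1 + 2 * f) (hf : 4 * f = 0) (r x : R) (i y : ℤ) (m : ℕ)
    (hmi : 4 ∣ (m : ℤ) * i) :
    ((affinePerm r (ε ^ i) * (affinePerm x (ε ^ y))⁻¹) ^ m * affinePerm x (ε ^ y) ^ m) 0 =
      r * m * (1 - y * f * (m - 1)) := by
  have he : 2 * f * (2 * f) = 0 := by linear_combination f * hf
  obtain ⟨c, hc⟩ := hmi
  have hc' : (m : R) * i = 4 * c := by exact_mod_cast congrArg (Int.cast : ℤ → R) hc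
  rw [affinePerm_mul_inv, ← zpow_neg, ← zpow_add, ← sub_eq_add_neg, affinePerm_pow,
    affinePerm_pow, affinePerm_mul, affinePerm_apply, sum_range_pow_val_zpow hε he,
    sum_range_pow_val_zpow hε he, ← zpow_natCast, ← zpow_mul,
    Units.val_zpow_eq_one_add_mul hε he, Units.val_zpow_eq_one_add_mul hε he]
  push_cast
  -- With `D = ∑ j` and modulo `4 f`, the left side is `r m + 2 f D ((r + x) i - r y)`;
  -- here `2 f D i = f (m i) (m - 1)` vanishes as `4 ∣ m i`, and `2 f D = f m (m - 1)`.
  linear_combination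
    (f * (r + x) * i - 2 * f * (i - y) * x - r * y * f) * sum_range_natCast_mul_two (R := R) m
    + (f * (r + x) * (m - 1)) * hc'
    + (c * (r + x) * (m - 1) + f * (m * y - (i - y)) * (i - y) * x * ∑ j ∈ range m, (j : R)) * hf

end AffinePerm

lemma List.prod_map_range_zpow_conj {Γ : Type*} [Group Γ] (g h : Γ) (m : ℕ) :
    ((List.range m).map (fun j => h ^ (-(j : ℤ)) * g * h ^ (j : ℤ))).prod =
      (g * h⁻¹) ^ m * h ^ m := by
  -- the ascription `(j : ℤ)` makes Lean coerce `List.range m` itself to a list of integers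
  simp only [bind_pure_comp, List.map_eq_map, List.map_map, Function.comp_def]
  induction m with
  | zero => simp
  | succ m ih =>
    rw [List.range_succ, List.map_append, List.prod_append, ih, List.map_singleton,
      List.prod_singleton, pow_succ, pow_succ]
    simp only [zpow_neg, zpow_natCast]
    group

lemma Subgroup.mem_normalizer_zpowers_of_conj {Γ : Type*} [Group Γ] {g h : Γ} {n n' : ℤ}
    (h₁ : g * h * g⁻¹ = h ^ n) (h₂ : g⁻¹ * h * g = h ^ n') :
    g ∈ Subgroup.normalizer (Subgroup.zpowers h : Set Γ) := by
  refine Subgroup.mem_normalizer_iff.mpr fun x => ⟨fun hx => ?_, fun hx => ?_⟩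
  · obtain ⟨S, rfl⟩ := Subgroup.mem_zpowers_iff.mp hx
    exact Subgroup.mem_zpowers_iff.mpr ⟨n * S, by rw [zpow_mul, ← h₁, conj_zpow]⟩
  · obtain ⟨S, hS⟩ := Subgroup.mem_zpowers_iff.mp hx
    refine Subgroup.mem_zpowers_iff.mpr ⟨n' * S, ?_⟩
    have h₂' : g⁻¹ * h * g⁻¹⁻¹ = h ^ n' := by rw [inv_inv]; exact h₂
    rw [zpow_mul, ← h₂', conj_zpow, hS]
    group

namespace ZkDl

variable {l k : ℕ}

lemma a_pow_two_pow_eq_one : a l k ^ 2 ^ l = 1 := by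
  have h := PresentedGroup.one_of_mem (rels := rels l k) (x := FreeGroup.of 0 ^ 2 ^ l)
    (by simp [rels])
  rw [map_pow] at h
  exact h

lemma u_pow_eq_one : u l k ^ k = 1 := by
  have h := PresentedGroup.one_of_mem (rels := rels l k) (x := FreeGroup.of 1 ^ k)
    (by simp [rels])
  rw [map_pow] at h
  exact h

lemma u_mul_a_mul_u_inv : u l k * a l k * (u l k)⁻¹ = a l k ^ n₁ l := by
  have h := PresentedGroup.one_of_mem (rels := rels l k)
    (x := FreeGroup.of 1 * FreeGroup.of 0 * (FreeGroup.of 1)⁻¹ * (FreeGroup.of 0 ^ n₁ l)⁻¹)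
    (by simp [rels])
  simp only [map_mul, map_inv, map_pow, mul_inv_eq_one] at h
  exact h

lemma a_pow_n₁_mul_n₁ (hl : 2 ≤ l) : a l k ^ (n₁ l * n₁ l) = a l k := by
  obtain ⟨l, rfl⟩ : ∃ l', l = l' + 2 := ⟨l - 2, by omega⟩
  have h : n₁ (l + 2) * n₁ (l + 2) = 1 + 2 ^ (l + 2) * (2 ^ l + 1) := by
    rw [n₁, show l + 2 - 1 = l + 1 by omega]; ring
  rw [h, pow_add, pow_mul, a_pow_two_pow_eq_one, one_pow, pow_one, mul_one]

lemma u_inv_mul_a_mul_u (hl : 2 ≤ l) : (u l k)⁻¹ * a l k * u l k = a l k ^ n₁ l := by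
  have h : u l k * a l k ^ n₁ l * (u l k)⁻¹ = a l k := by
    rw [← conj_pow, u_mul_a_mul_u_inv, ← pow_mul, a_pow_n₁_mul_n₁ hl]
  calc (u l k)⁻¹ * a l k * u l k = (u l k)⁻¹ * (u l k * a l k ^ n₁ l * (u l k)⁻¹) * u l k := by
        rw [h]
    _ = a l k ^ n₁ l := by group

lemma a_zpow_mul_u_zpow_mem (S T : ℤ) :
    a l k ^ S * u l k ^ T ∈ Subgroup.zpowers (a l k) ⊔ Subgroup.zpowers (u l k) :=
  mul_mem (Subgroup.mem_sup_left (Subgroup.zpow_mem_zpowers _ _))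
    (Subgroup.mem_sup_right (Subgroup.zpow_mem_zpowers _ _))

lemma exists_a_zpow_mul_u_zpow (hl : 2 ≤ l) {w : G l k}
    (hw : w ∈ Subgroup.zpowers (a l k) ⊔ Subgroup.zpowers (u l k)) :
    ∃ S T : ℤ, a l k ^ S * u l k ^ T = w := by
  have hu : u l k ∈ Subgroup.normalizer (Subgroup.zpowers (a l k) : Set (G l k)) := by
    apply Subgroup.mem_normalizer_zpowers_of_conj (n := n₁ l) (n' := n₁ l) <;>
      simp only [zpow_natCast, u_mul_a_mul_u_inv, u_inv_mul_a_mul_u hl]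
  rw [← SetLike.mem_coe, Subgroup.coe_mul_of_right_le_normalizer_left _ _
    (Subgroup.zpowers_le.mpr hu)] at hw
  obtain ⟨_, ⟨S, rfl⟩, _, ⟨T, rfl⟩, rfl⟩ := hw
  exact ⟨S, T, rfl⟩

lemma two_pow_eq_zero : (2 : ZMod (2 ^ l)) ^ l = 0 := by
  exact_mod_cast ZMod.natCast_self (2 ^ l)

lemma four_mul_two_pow_sub_two (hl : 2 ≤ l) : (4 : ZMod (2 ^ l)) * 2 ^ (l - 2) = 0 := by
  rw [show (4 : ZMod (2 ^ l)) = 2 ^ 2 by norm_num, ← pow_add, Nat.add_sub_cancel' hl,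
    two_pow_eq_zero]

lemma isUnit_one_sub_mul_two_pow (hl : 3 ≤ l) (y : ℤ) (m : ℕ) :
    IsUnit (1 - y * (2 : ZMod (2 ^ l)) ^ (l - 2) * (m - 1)) := by
  have h2 : IsNilpotent (2 : ZMod (2 ^ l)) := ⟨l, two_pow_eq_zero⟩
  exact IsNilpotent.isUnit_one_sub <| (Commute.all _ _).isNilpotent_mul_right <|
    (Commute.all _ _).isNilpotent_mul_left <| h2.pow_of_pos (by omega)

def ε (hl : 2 ≤ l) : (ZMod (2 ^ l))ˣ :=
  Units.mkOfMulEqOne (1 + 2 * 2 ^ (l - 2)) (1 + 2 * 2 ^ (l - 2))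
    (by linear_combination (1 + 2 ^ (l - 2)) * four_mul_two_pow_sub_two hl)

lemma val_ε (hl : 2 ≤ l) : (ε hl : ZMod (2 ^ l)) = 1 + 2 * 2 ^ (l - 2) :=
  Units.val_mkOfMulEqOne _

lemma ε_mul_self (hl : 2 ≤ l) : ε hl * ε hl = 1 := by
  ext
  rw [Units.val_mul, val_ε, Units.val_one]
  linear_combination (1 + 2 ^ (l - 2)) * four_mul_two_pow_sub_two hl

lemma ε_pow_eq_one (hl : 2 ≤ l) (hk : 2 ∣ k) : ε hl ^ k = 1 := by
  obtain ⟨c, rfl⟩ := hk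
  rw [pow_mul, sq, ε_mul_self, one_pow]

lemma natCast_n₁ (hl : 2 ≤ l) : ((n₁ l : ℕ) : ZMod (2 ^ l)) = ε hl := by
  rw [n₁, val_ε, show l - 1 = l - 2 + 1 by omega]
  push_cast
  ring

lemma natCast_n₂ (hl : 2 ≤ l) : ((n₂ l : ℕ) : ZMod (2 ^ l)) = ↑(-ε hl) := by
  rw [n₂, show l - 1 = l - 2 + 1 by omega, Nat.cast_sub Nat.one_le_two_pow, Units.val_neg, val_ε]
  push_cast
  linear_combination four_mul_two_pow_sub_two hl

def repGen (hl : 2 ≤ l) : Fin 3 → Equiv.Perm (ZMod (2 ^ l)) × DihedralGroup k :=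
  ![(affinePerm 1 1, 1), (affinePerm 0 (ε hl), .r 1), (affinePerm 0 (-ε hl), .sr 0)]

lemma repGen_rels (hl : 2 ≤ l) (hk : 2 ∣ k) :
    ∀ w ∈ rels l k, FreeGroup.lift (repGen (k := k) hl) w = 1 := by
  intro w hw
  simp only [rels, Set.mem_insert_iff, Set.mem_singleton_iff] at hw
  rcases hw with rfl | rfl | rfl | rfl | rfl | rfl <;>
    simp [repGen, Prod.ext_iff, affinePerm_mul, affinePerm_inv, affinePerm_pow, natCast_n₁ hl,
      natCast_n₂ hl, ε_pow_eq_one hl hk, ε_mul_self, sq]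

def rep (hl : 2 ≤ l) (hk : 2 ∣ k) : G l k →* Equiv.Perm (ZMod (2 ^ l)) × DihedralGroup k :=
  PresentedGroup.toGroup (repGen_rels hl hk)

lemma rep_a_zpow_mul_u_zpow (hl : 2 ≤ l) (hk : 2 ∣ k) (S T : ℤ) :
    rep hl hk (a l k ^ S * u l k ^ T) =
      (affinePerm (S : ZMod (2 ^ l)) (ε hl ^ T), DihedralGroup.r (T : ZMod k)) := by
  have ha : rep hl hk (a l k) = (affinePerm 1 1, 1) := PresentedGroup.toGroup.of _
  have hu : rep hl hk (u l k) = (affinePerm 0 (ε hl), .r 1) := PresentedGroup.toGroup.of _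
  rw [map_mul, map_zpow, map_zpow, ha, hu, Prod.pow_mk, Prod.pow_mk, Prod.mk_mul_mk,
    affinePerm_one_zpow, affinePerm_zero_zpow, affinePerm_mul, DihedralGroup.r_one_zpow,
    one_zpow, one_mul]
  simp

lemma eq_one_iff_rep (hl : 2 ≤ l) (hk : 2 ∣ k) {w : G l k}
    (hw : w ∈ Subgroup.zpowers (a l k) ⊔ Subgroup.zpowers (u l k)) :
    w = 1 ↔ (rep hl hk w).1 0 = 0 ∧ (rep hl hk w).2 = 1 := by
  refine ⟨fun h => by simp [h], fun h => ?_⟩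
  obtain ⟨S, T, rfl⟩ := exists_a_zpow_mul_u_zpow hl hw
  rw [rep_a_zpow_mul_u_zpow] at h
  simp only [affinePerm_apply, mul_zero, add_zero, DihedralGroup.one_def, DihedralGroup.r.injEq,
    CharP.intCast_eq_zero_iff _ (2 ^ l), CharP.intCast_eq_zero_iff _ k] at h
  obtain ⟨⟨c, rfl⟩, ⟨d, rfl⟩⟩ := h
  rw [zpow_mul, zpow_mul]
  norm_cast
  rw [a_pow_two_pow_eq_one, u_pow_eq_one, one_zpow, one_zpow, one_mul]

lemma rep_mul_inv_pow_mul_pow (hl : 2 ≤ l) (hk : 2 ∣ k) (r i x y : ℤ) (m : ℕ) :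
    rep hl hk ((a l k ^ r * u l k ^ i * (a l k ^ x * u l k ^ y)⁻¹) ^ m *
        (a l k ^ x * u l k ^ y) ^ m) =
      ((affinePerm (r : ZMod (2 ^ l)) (ε hl ^ i) *
          (affinePerm (x : ZMod (2 ^ l)) (ε hl ^ y))⁻¹) ^ m *
        affinePerm (x : ZMod (2 ^ l)) (ε hl ^ y) ^ m, DihedralGroup.r ((m * i : ℤ) : ZMod k)) := by
  rw [map_mul, map_pow, map_pow, map_mul, map_inv, rep_a_zpow_mul_u_zpow, rep_a_zpow_mul_u_zpow]
  refine Prod.ext rfl ?_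
  simp only [Prod.snd_mul, Prod.pow_snd, Prod.snd_inv, ← DihedralGroup.r_one_zpow]
  group

end ZkDl

theorem mem_Gm_iff (l k : ℕ) (hl : 3 ≤ l) (hk : 4 ∣ k) (x y r i : ℤ) (m : ℕ) :
    a l k ^ x * u l k ^ y ∈ Gm l k (a l k ^ r * u l k ^ i) m ↔
      ((k : ℤ) ∣ (m : ℤ) * i ∧ (2 ^ l : ℤ) ∣ (m : ℤ) * r) := by
  have hl₂ : 2 ≤ l := by omega
  have hk₂ : 2 ∣ k := dvd_trans (by norm_num) hk
  have hg := a_zpow_mul_u_zpow_mem (l := l) (k := k) r i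
  have hh := a_zpow_mul_u_zpow_mem (l := l) (k := k) x y
  rw [Gm, Set.mem_ofPred_eq, List.prod_map_range_zpow_conj,
    eq_one_iff_rep hl₂ hk₂ (mul_mem (pow_mem (mul_mem hg (inv_mem hh)) m) (pow_mem hh m)),
    rep_mul_inv_pow_mul_pow, DihedralGroup.one_def, DihedralGroup.r.injEq,
    CharP.intCast_eq_zero_iff _ k, and_comm]
  refine and_congr_right fun hmi => ?_
  rw [affinePerm_mul_inv_pow_mul_pow_apply_zero (val_ε hl₂) (four_mul_two_pow_sub_two hl₂)
      _ _ _ _ _ ((Int.natCast_dvd_natCast.mpr hk).trans hmi),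
    (isUnit_one_sub_mul_two_pow hl y m).mul_left_eq_zero]
  simpa [mul_comm] using CharP.intCast_eq_zero_iff (ZMod (2 ^ l)) (2 ^ l) (m * r)
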